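/- arXiv:2306.08654 — 2 statements merged into one kernel-verified Lean document; each statement's English description precedes it below -/
import Mathlib

section
/- Let 0 < σ ≤ 1, φ ∈ C¹([a,b]) with φ' > 0, and n ∈ ℕ with n ≥ 1. Define the proportional integral (ₐI^{n,σ,φ} f)(t) = (1/(σⁿ Γ(n))) ∫ₐᵗ e^{((σ−1)/σ)(φ(t)−φ(τ))} (φ(t)−φ(τ))^{n−1} f(τ) φ'(τ) dτ. Then for n = 1 and continuous f, the function t ↦ (ₐI^{1,σ,φ} f)(t) is differentiable and satisfies D^{σ,φ}(ₐI^{1,σ,φ} f)(t) = f(t) for all t ∈ (a,b), where (D^{σ,φ} g)(t) = (1−σ)g(t) + σ g'(t)/φ'(t). -/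
open Real intervalIntegral

/-- The proportional integral of order `n` with respect to `φ`:
`(ₐI^{n,σ,φ} f)(t) = (1/(σⁿ Γ(n))) ∫ₐᵗ e^{((σ−1)/σ)(φ(t)−φ(τ))} (φ(t)−φ(τ))^{n−1} f(τ) φ'(τ) dτ`. -/
noncomputable def propIntN (n : ℕ) (σ : ℝ) (φ f : ℝ → ℝ) (a t : ℝ) : ℝ :=
  (1 / (σ ^ n * Real.Gamma n)) *
    ∫ τ in a..t, Real.exp (((σ - 1) / σ) * (φ t - φ τ)) * (φ t - φ τ) ^ (n - 1)
      * f τ * deriv φ τ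

/-!
For `n = 1` the kernel factors: with `c = (σ - 1) / σ`,
`σ · (ₐI^{1,σ,φ} f)(t) = e^{c φ(t)} ∫ₐᵗ e^{-c φ(τ)} f(τ) φ'(τ) dτ`.
The fundamental theorem of calculus and the product rule then give the linear ODE
`I' = φ' · (c I + f / σ)`, and `(1 - σ) + σ c = 0` makes `D^{σ,φ} I = f`.
-/

theorem hasDerivAt_integral_of_continuousOn_Icc {E : Type*} [NormedAddCommGroup E]
    [NormedSpace ℝ E] [CompleteSpace E] {G : ℝ → E} {a b t : ℝ}
    (hG : ContinuousOn G (Set.Icc a b)) (ht : t ∈ Set.Ioo a b) :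
    HasDerivAt (fun s => ∫ τ in a..s, G τ) (G t) t := by
  have hsub : Set.uIcc a t ⊆ Set.Icc a b :=
    Set.uIcc_subset_Icc (Set.left_mem_Icc.2 (ht.1.trans ht.2).le) (Set.mem_Icc_of_Ioo ht)
  exact integral_hasDerivAt_right ((hG.mono hsub).intervalIntegrable)
    ((hG.mono Set.Ioo_subset_Icc_self).stronglyMeasurableAtFilter isOpen_Ioo t ht)
    (hG.continuousAt (Icc_mem_nhds ht.1 ht.2))

theorem propIntN_one_eq (σ : ℝ) (φ f : ℝ → ℝ) (a : ℝ) :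
    propIntN 1 σ φ f a = fun s => σ⁻¹ * (exp ((σ - 1) / σ * φ s) *
      ∫ τ in a..s, exp (-((σ - 1) / σ * φ τ)) * f τ * deriv φ τ) := by
  funext s
  simp only [propIntN, pow_one, Nat.cast_one, Real.Gamma_one, mul_one, Nat.sub_self,
    pow_zero, one_div, ← integral_const_mul]
  refine integral_congr fun τ _ => ?_
  simp only [mul_sub, exp_sub, exp_neg]
  ring

theorem hasDerivAt_propIntN_one {σ : ℝ} {φ f : ℝ → ℝ} {a b t : ℝ}
    (hφ : ContDiff ℝ 1 φ) (hf : ContinuousOn f (Set.Icc a b)) (ht : t ∈ Set.Ioo a b) :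
    HasDerivAt (propIntN 1 σ φ f a)
      (deriv φ t * ((σ - 1) / σ * propIntN 1 σ φ f a t + f t / σ)) t := by
  rw [propIntN_one_eq]
  set c := (σ - 1) / σ
  have hG : ContinuousOn (fun τ => exp (-(c * φ τ)) * f τ * deriv φ τ) (Set.Icc a b) :=
    (((hφ.continuous.const_mul c).neg.rexp.continuousOn).mul hf).mul
      (hφ.continuous_deriv le_rfl).continuousOn
  have hexp : HasDerivAt (fun s => exp (c * φ s)) (exp (c * φ t) * (c * deriv φ t)) t :=
    ((hφ.differentiable one_ne_zero t).hasDerivAt.const_mul c).exp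
  have hint := hasDerivAt_integral_of_continuousOn_Icc hG ht
  refine ((hexp.mul hint).const_mul σ⁻¹).congr_deriv ?_
  have hcancel : exp (c * φ t) * exp (-(c * φ t)) = 1 := by
    rw [← exp_add, add_neg_cancel, exp_zero]
  linear_combination (deriv φ t * f t * σ⁻¹) * hcancel

theorem propInt_one_inverse_general (σ : ℝ) (hσ0 : 0 < σ)
    (a b : ℝ) (φ f : ℝ → ℝ)
    (hφ : ContDiff ℝ 1 φ) (hφ' : ∀ t ∈ Set.Icc a b, 0 < deriv φ t)
    (hf : ContinuousOn f (Set.Icc a b)) :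
    ∀ t ∈ Set.Ioo a b,
      DifferentiableAt ℝ (propIntN 1 σ φ f a) t ∧
      (1 - σ) * propIntN 1 σ φ f a t + σ * deriv (propIntN 1 σ φ f a) t / deriv φ t
        = f t := by
  intro t ht
  have hderiv := hasDerivAt_propIntN_one (σ := σ) hφ hf ht
  refine ⟨hderiv.differentiableAt, ?_⟩
  have hφt : deriv φ t ≠ 0 := (hφ' t (Set.mem_Icc_of_Ioo ht)).ne'
  rw [hderiv.deriv]
  field_simp
  ring

/-- For `n = 1`, continuous `f`, and `φ ∈ C¹` with `φ' > 0`,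
`t ↦ (ₐI^{1,σ,φ} f)(t)` is differentiable on `(a,b)` and
`D^{σ,φ}(ₐI^{1,σ,φ} f)(t) = f(t)`, with `(D^{σ,φ} g)(t) = (1−σ)g(t) + σ g'(t)/φ'(t)`. -/
theorem propInt_one_inverse (σ : ℝ) (hσ0 : 0 < σ) (hσ1 : σ ≤ 1)
    (a b : ℝ) (hab : a < b) (φ f : ℝ → ℝ)
    (hφ : ContDiff ℝ 1 φ) (hφ' : ∀ t ∈ Set.Icc a b, 0 < deriv φ t)
    (hf : ContinuousOn f (Set.Icc a b)) :
    ∀ t ∈ Set.Ioo a b,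
      DifferentiableAt ℝ (propIntN 1 σ φ f a) t ∧
      (1 - σ) * propIntN 1 σ φ f a t + σ * deriv (propIntN 1 σ φ f a) t / deriv φ t
        = f t :=
  propInt_one_inverse_general σ hσ0 a b φ f hφ hφ' hf
end

section
/- Let ψ be a structural set of ℍ, let σ ∈ ℍ be invertible, and let δ = σ⁻¹(1−σ) = Σ_k ψ_k δ_k with δ_k ∈ ℝ. For f ∈ C¹(Ω, ℍ) define ᵠD^{σ} f = (1−σ)f + σ ᵠD f. Then for every x ∈ Ω: e^{−Σ_k x_k δ_k} · σ · ᵠD[ e^{Σ_k x_k δ_k} f ](x) = (ᵠD^{σ} f)(x), where e^{Σ_k x_k δ_k} is the (real) scalar exponential factor. -/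
open scoped Quaternion

/-- A structural set of quaternions. -/
def IsStructuralSet (ψ : Fin 4 → ℍ[ℝ]) : Prop :=
  ∀ k s : Fin 4,
    (1 / 2 : ℝ) • (star (ψ k) * ψ s + star (ψ s) * ψ k) = if k = s then 1 else 0

/-- Partial derivative `∂_k f` of an ℍ-valued function on ℝ⁴. -/
noncomputable def pderivQ (k : Fin 4) (f : (Fin 4 → ℝ) → ℍ[ℝ]) (x : Fin 4 → ℝ) : ℍ[ℝ] :=
  fderiv ℝ f x (Pi.single k 1)

/-- Partial derivative `∂_k u` of a real-valued function on ℝ⁴. -/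
noncomputable def pderivR (k : Fin 4) (u : (Fin 4 → ℝ) → ℝ) (x : Fin 4 → ℝ) : ℝ :=
  fderiv ℝ u x (Pi.single k 1)

/-- The left ψ-Fueter operator `ᵠD[f] = Σ_k ψ_k ∂_k f`. -/
noncomputable def fueterL (ψ : Fin 4 → ℍ[ℝ]) (f : (Fin 4 → ℝ) → ℍ[ℝ]) (x : Fin 4 → ℝ) :
    ℍ[ℝ] := ∑ k : Fin 4, ψ k * pderivQ k f x

/-- The right ψ-Fueter operator `ᵠD_r[g] = Σ_k (∂_k g) ψ_k`. -/
noncomputable def fueterR (ψ : Fin 4 → ℍ[ℝ]) (g : (Fin 4 → ℝ) → ℍ[ℝ]) (x : Fin 4 → ℝ) :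
    ℍ[ℝ] := ∑ k : Fin 4, pderivQ k g x * ψ k

/-! Since `e^{⟨y, δ⟩}` is a real scalar, the Leibniz rule gives
`ᵠD[e^{⟨y, δ⟩} f] = e^{⟨x, δ⟩} ((Σ_k δ_k ψ_k) f + ᵠD f) = e^{⟨x, δ⟩} (σ⁻¹(1 - σ) f + ᵠD f)`,
and left multiplication by `σ` cancels `σ⁻¹`. -/

section Leibniz

variable {u : (Fin 4 → ℝ) → ℝ} {f : (Fin 4 → ℝ) → ℍ[ℝ]} {x : Fin 4 → ℝ}

theorem pderivQ_smul (k : Fin 4) (hu : DifferentiableAt ℝ u x) (hf : DifferentiableAt ℝ f x) :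
    pderivQ k (fun y => u y • f y) x = u x • pderivQ k f x + pderivR k u x • f x := by
  simp [pderivQ, pderivR, fderiv_fun_smul hu hf]

theorem fueterL_smul (ψ : Fin 4 → ℍ[ℝ]) (hu : DifferentiableAt ℝ u x)
    (hf : DifferentiableAt ℝ f x) :
    fueterL ψ (fun y => u y • f y) x
      = u x • fueterL ψ f x + (∑ k : Fin 4, pderivR k u x • ψ k) * f x := by
  simp only [fueterL, pderivQ_smul _ hu hf, mul_add, mul_smul_comm, Finset.sum_add_distrib,
    Finset.smul_sum, Finset.sum_mul, smul_mul_assoc]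

end Leibniz

theorem pderivR_exp_sum_mul (δ : Fin 4 → ℝ) (k : Fin 4) (x : Fin 4 → ℝ) :
    pderivR k (fun y => Real.exp (∑ j : Fin 4, y j * δ j)) x
      = Real.exp (∑ j : Fin 4, x j * δ j) * δ k := by
  have hlin : HasFDerivAt (fun y : Fin 4 → ℝ => ∑ j : Fin 4, y j * δ j)
      (∑ j : Fin 4, δ j • (ContinuousLinearMap.proj j : (Fin 4 → ℝ) →L[ℝ] ℝ)) x := by
    convert ContinuousLinearMap.hasFDerivAt _ using 1
    ext y
    simp [mul_comm]
  simp [pderivR, hlin.exp.fderiv, Pi.single_apply]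

theorem fueterL_prop_conjugation_general (ψ : Fin 4 → ℍ[ℝ])
    (Ω : Set (Fin 4 → ℝ)) (hΩ : IsOpen Ω)
    (σ : ℍ[ℝ]) (hσ : σ ≠ 0) (δ : Fin 4 → ℝ)
    (hδ : σ⁻¹ * (1 - σ) = ∑ k : Fin 4, δ k • ψ k)
    (f : (Fin 4 → ℝ) → ℍ[ℝ]) (hf : ContDiffOn ℝ 1 f Ω)
    (x : Fin 4 → ℝ) (hx : x ∈ Ω) :
    Real.exp (-∑ k : Fin 4, x k * δ k) •
        (σ * fueterL ψ (fun y => Real.exp (∑ k : Fin 4, y k * δ k) • f y) x)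
      = (1 - σ) * f x + σ * fueterL ψ f x := by
  have hfx : DifferentiableAt ℝ f x :=
    (hf.contDiffAt (hΩ.mem_nhds hx)).differentiableAt one_ne_zero
  have hexp_sum : ∑ k : Fin 4, pderivR k (fun y => Real.exp (∑ j : Fin 4, y j * δ j)) x • ψ k
      = Real.exp (∑ k : Fin 4, x k * δ k) • (σ⁻¹ * (1 - σ)) := by
    simp only [pderivR_exp_sum_mul, mul_smul, ← Finset.smul_sum, hδ]
  rw [fueterL_smul ψ (by fun_prop) hfx, hexp_sum, smul_mul_assoc, ← smul_add, mul_smul_comm,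
    smul_smul, ← Real.exp_add, neg_add_cancel, Real.exp_zero, one_smul, mul_add, ← mul_assoc,
    ← mul_assoc, mul_inv_cancel₀ hσ, one_mul, add_comm]

/-- with `σ ∈ ℍ` invertible, `δ = σ⁻¹(1−σ) = Σ_k ψ_k δ_k` (`δ_k ∈ ℝ`), and
`ᵠD^{σ} f = (1−σ)f + σ ᵠD f`, one has
`e^{−Σ x_k δ_k} σ ᵠD[e^{Σ x_k δ_k} f](x) = (ᵠD^{σ} f)(x)`. -/
theorem fueterL_prop_conjugation (ψ : Fin 4 → ℍ[ℝ]) (hψ : IsStructuralSet ψ)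
    (Ω : Set (Fin 4 → ℝ)) (hΩ : IsOpen Ω)
    (σ : ℍ[ℝ]) (hσ : σ ≠ 0) (δ : Fin 4 → ℝ)
    (hδ : σ⁻¹ * (1 - σ) = ∑ k : Fin 4, δ k • ψ k)
    (f : (Fin 4 → ℝ) → ℍ[ℝ]) (hf : ContDiffOn ℝ 1 f Ω)
    (x : Fin 4 → ℝ) (hx : x ∈ Ω) :
    Real.exp (-∑ k : Fin 4, x k * δ k) •
        (σ * fueterL ψ (fun y => Real.exp (∑ k : Fin 4, y k * δ k) • f y) x)
      = (1 - σ) * f x + σ * fueterL ψ f x :=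
  fueterL_prop_conjugation_general ψ Ω hΩ σ hσ δ hδ f hf x hx
end
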